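/- Let z : [0, s₀] → ℂ be the arc-length parametrization of a smooth closed Jordan curve ℓ, so that there is a constant c₀ > 0 with |z(s) − z(σ)| ≥ c₀|s − σ| for all s, σ. If f is absolutely continuous on ℓ with derivative f′ ∈ L^p(ℓ) for some p > 1, then sup_{σ∈[0,s₀]} ∫₀^{s₀} |f(s) − f(σ)|/|z(s) − z(σ)| ds ≤ C · ‖f′‖_{L^p} for a constant C depending only on p, s₀, and c₀. -/

import Mathlib

/-!
By `f(s) - f(σ) = ∫_σ^s f'` and Hölder's inequality, `|f(s) - f(σ)| ≤ ‖f'‖_p |s - σ|^(1 - 1/p)`,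
while the chord–arc condition gives `|z(s) - z(σ)| ≥ c₀ |s - σ|`. The integrand is therefore at
most `(‖f'‖_p / c₀) |s - σ|^(-1/p)`, which is integrable because `1/p < 1`, with
`∫₀^s₀ |s - σ|^(-1/p) ds ≤ 2 s₀^(1 - 1/p) / (1 - 1/p)`.
-/

open MeasureTheory Set intervalIntegral
open scoped Interval

theorem setIntegral_norm_le_Lp_mul_measureReal_rpow {α E : Type*} [MeasurableSpace α]
    [NormedAddCommGroup E] {μ : Measure α} {s : Set α} (hs : μ s ≠ ⊤) {p : ℝ} (hp : 1 < p)
    {g : α → E} (hg : AEStronglyMeasurable g (μ.restrict s))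
    (hgp : IntegrableOn (fun x => ‖g x‖ ^ p) s μ) :
    ∫ x in s, ‖g x‖ ∂μ ≤ (∫ x in s, ‖g x‖ ^ p ∂μ) ^ (1 / p) * μ.real s ^ (1 - 1 / p) := by
  have hpq := Real.HolderConjugate.conjExponent hp
  have hq : 1 / p.conjExponent = 1 - 1 / p := by
    rw [eq_sub_iff_add_eq, add_comm, one_div, one_div, hpq.inv_add_inv_eq_one]
  have hp0 : ENNReal.ofReal p ≠ 0 := (ENNReal.ofReal_pos.mpr (by linarith)).ne'
  have : Fact (μ s < ⊤) := ⟨hs.lt_top⟩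
  have hgLp : MemLp g (ENNReal.ofReal p) (μ.restrict s) := by
    rw [← integrable_norm_rpow_iff hg hp0 ENNReal.ofReal_ne_top,
      ENNReal.toReal_ofReal (by linarith)]
    exact hgp
  have holder := integral_mul_le_Lp_mul_Lq_of_nonneg hpq
    (.of_forall fun x => norm_nonneg (g x)) (.of_forall fun _ => zero_le_one)
    hgLp.norm (memLp_const (1 : ℝ))
  simpa [hq, Measure.real] using holder

theorem norm_intervalIntegral_le_Lp_mul_rpow_of_mem_Icc {E : Type*} [NormedAddCommGroup E]
    [NormedSpace ℝ E] {p : ℝ} (hp : 1 < p) {g : ℝ → E} {a b x y : ℝ}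
    (hx : x ∈ Icc a b) (hy : y ∈ Icc a b) (hg : IntervalIntegrable g volume a b)
    (hgp : IntervalIntegrable (fun t => ‖g t‖ ^ p) volume a b) :
    ‖∫ t in x..y, g t‖ ≤ (∫ t in a..b, ‖g t‖ ^ p) ^ (1 / p) * |y - x| ^ (1 - 1 / p) := by
  have hab : a ≤ b := hx.1.trans hx.2
  have hsub : Ι x y ⊆ Ioc a b := Ioc_subset_Ioc (le_min hx.1 hy.1) (max_le hx.2 hy.2)
  rw [intervalIntegrable_iff_integrableOn_Ioc_of_le hab] at hg hgp
  have hvol : volume.real (Ι x y) = |y - x| := by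
    rw [Measure.real, Real.volume_uIoc, ENNReal.toReal_ofReal (abs_nonneg (y - x))]
  calc ‖∫ t in x..y, g t‖ ≤ ∫ t in Ι x y, ‖g t‖ := norm_integral_le_integral_norm_uIoc
    _ ≤ (∫ t in Ι x y, ‖g t‖ ^ p) ^ (1 / p) * |y - x| ^ (1 - 1 / p) := by
      rw [← hvol]
      exact setIntegral_norm_le_Lp_mul_measureReal_rpow (by simp [Real.volume_uIoc]) hp
        (hg.mono_set hsub).aestronglyMeasurable (hgp.mono_set hsub)
    _ ≤ (∫ t in a..b, ‖g t‖ ^ p) ^ (1 / p) * |y - x| ^ (1 - 1 / p) := by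
      gcongr
      rw [integral_of_le hab]
      exact setIntegral_mono_set hgp (.of_forall fun t => by positivity) hsub.eventuallyLE

section AbsSubRpow

variable {r a b c : ℝ}

theorem eqOn_abs_sub_rpow_right (hcb : c ≤ b) :
    EqOn (fun s => |s - c| ^ r) (fun s => (s - c) ^ r) [[c, b]] := by
  intro s hs
  rw [uIcc_of_le hcb] at hs
  simp only [abs_of_nonneg (sub_nonneg.mpr hs.1)]

theorem eqOn_abs_sub_rpow_left (hac : a ≤ c) :
    EqOn (fun s => |s - c| ^ r) (fun s => (c - s) ^ r) [[a, c]] := by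
  intro s hs
  rw [uIcc_of_le hac] at hs
  simp only [abs_sub_comm s c, abs_of_nonneg (sub_nonneg.mpr hs.2)]

theorem intervalIntegrable_abs_sub_rpow (hr : -1 < r) (hac : a ≤ c) (hcb : c ≤ b) :
    IntervalIntegrable (fun s => |s - c| ^ r) volume a b := by
  have hleft : IntervalIntegrable (fun s => (c - s) ^ r) volume a c := by
    simpa using ((intervalIntegrable_rpow' hr (a := c - a) (b := 0)).comp_sub_left c)
  have hright : IntervalIntegrable (fun s => (s - c) ^ r) volume c b := by
    simpa using (intervalIntegrable_rpow' hr (a := 0) (b := b - c)).comp_sub_right c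
  exact (hleft.congr ((eqOn_abs_sub_rpow_left hac).symm.mono uIoc_subset_uIcc)).trans
    (hright.congr ((eqOn_abs_sub_rpow_right hcb).symm.mono uIoc_subset_uIcc))

theorem integral_abs_sub_rpow (hr : -1 < r) (hac : a ≤ c) (hcb : c ≤ b) :
    ∫ s in a..b, |s - c| ^ r = ((c - a) ^ (r + 1) + (b - c) ^ (r + 1)) / (r + 1) := by
  have hr' : r + 1 ≠ 0 := by linarith
  rw [← integral_add_adjacent_intervals (intervalIntegrable_abs_sub_rpow hr hac le_rfl)
    (intervalIntegrable_abs_sub_rpow hr le_rfl hcb), integral_congr (eqOn_abs_sub_rpow_left hac),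
    integral_congr (eqOn_abs_sub_rpow_right hcb), integral_comp_sub_left (· ^ r),
    integral_comp_sub_right (· ^ r), integral_rpow (.inl hr), integral_rpow (.inl hr)]
  simp [Real.zero_rpow hr', add_div]

theorem integral_abs_sub_rpow_le (hr : -1 < r) (hac : a ≤ c) (hcb : c ≤ b) :
    ∫ s in a..b, |s - c| ^ r ≤ 2 * (b - a) ^ (r + 1) / (r + 1) := by
  have hr1 : 0 ≤ r + 1 := by linarith
  rw [integral_abs_sub_rpow hr hac hcb, two_mul]
  gcongr

end AbsSubRpow

theorem intervalIntegral.integral_mono_on_of_nonneg {f g : ℝ → ℝ} {μ : Measure ℝ} {a b : ℝ}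
    (hab : a ≤ b) (hf : ∀ x ∈ Icc a b, 0 ≤ f x) (hg : IntervalIntegrable g μ a b)
    (hfg : ∀ x ∈ Icc a b, f x ≤ g x) : ∫ x in a..b, f x ∂μ ≤ ∫ x in a..b, g x ∂μ := by
  -- `f` need not be integrable: otherwise its integral is `0`.
  rw [integral_of_le hab, integral_of_le hab]
  refine integral_mono_of_nonneg ?_ hg.1 ?_ <;>
    filter_upwards [ae_restrict_mem measurableSet_Ioc] with x hx
  exacts [hf x (Ioc_subset_Icc_self hx), hfg x (Ioc_subset_Icc_self hx)]

theorem div_le_div_mul_rpow_sub_one {A B M c d α : ℝ} (hc : 0 < c) (hd : 0 ≤ d) (hα : 0 < α)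
    (hM : 0 ≤ M) (hA : A ≤ M * d ^ α) (hB : c * d ≤ B) : A / B ≤ M / c * d ^ (α - 1) := by
  rcases hd.eq_or_lt with rfl | hd
  · rw [Real.zero_rpow hα.ne', mul_zero] at hA
    exact (div_nonpos_of_nonpos_of_nonneg hA (by simpa using hB)).trans (by positivity)
  calc A / B ≤ M * d ^ α / (c * d) := div_le_div₀ (by positivity) hA (by positivity) hB
    _ = M / c * d ^ (α - 1) := by rw [Real.rpow_sub_one hd.ne', mul_div_mul_comm]

theorem chord_arc_holder_estimate_general
    (p s₀ c₀ : ℝ) (hp : 1 < p) (hc₀ : 0 < c₀) :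
    ∃ C : ℝ, ∀ (z : ℝ → ℂ) (f fd : ℝ → ℂ),
      Continuous z →
      (∀ s ∈ Icc (0:ℝ) s₀, ∀ σ ∈ Icc (0:ℝ) s₀, c₀ * |s - σ| ≤ ‖z s - z σ‖) →
      IntervalIntegrable fd volume 0 s₀ →
      IntervalIntegrable (fun x => ‖fd x‖ ^ p) volume 0 s₀ →
      (∀ s ∈ Icc (0:ℝ) s₀, ∀ σ ∈ Icc (0:ℝ) s₀,
        f s - f σ = ∫ x in σ..s, fd x) →
      ∀ σ ∈ Icc (0:ℝ) s₀,
        (∫ s in (0:ℝ)..s₀, ‖f s - f σ‖ / ‖z s - z σ‖) ≤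
          C * (∫ x in (0:ℝ)..s₀, ‖fd x‖ ^ p) ^ (1 / p) := by
  set α := 1 - 1 / p
  have hα : 0 < α := sub_pos.mpr ((div_lt_one (by linarith)).mpr hp)
  refine ⟨2 * s₀ ^ α / α / c₀, ?_⟩
  intro z f fd _ hchord hfd hfdp hf σ hσ
  have hs₀ : 0 ≤ s₀ := hσ.1.trans hσ.2
  set M := (∫ x in (0:ℝ)..s₀, ‖fd x‖ ^ p) ^ (1 / p)
  have hM : 0 ≤ M := Real.rpow_nonneg (integral_nonneg hs₀ fun _ _ => by positivity) _
  have hbound : ∀ s ∈ Icc 0 s₀, ‖f s - f σ‖ / ‖z s - z σ‖ ≤ M / c₀ * |s - σ| ^ (α - 1) :=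
    fun s hs => div_le_div_mul_rpow_sub_one hc₀ (abs_nonneg _) hα hM
      (hf s hs σ hσ ▸ norm_intervalIntegral_le_Lp_mul_rpow_of_mem_Icc hp hσ hs hfd hfdp)
      (hchord s hs σ hσ)
  have hr : -1 < α - 1 := by linarith
  calc ∫ s in 0..s₀, ‖f s - f σ‖ / ‖z s - z σ‖
      ≤ ∫ s in 0..s₀, M / c₀ * |s - σ| ^ (α - 1) :=
        integral_mono_on_of_nonneg hs₀ (fun _ _ => by positivity)
          ((intervalIntegrable_abs_sub_rpow hr hσ.1 hσ.2).const_mul _) hbound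
    _ = M / c₀ * ∫ s in 0..s₀, |s - σ| ^ (α - 1) := integral_const_mul _ _
    _ ≤ M / c₀ * (2 * s₀ ^ α / α) := by
        gcongr
        simpa using integral_abs_sub_rpow_le hr hσ.1 hσ.2
    _ = 2 * s₀ ^ α / α / c₀ * M := by ring

theorem chord_arc_holder_estimate
    (p s₀ c₀ : ℝ) (hp : 1 < p) (hs₀ : 0 < s₀) (hc₀ : 0 < c₀) :
    ∃ C : ℝ, ∀ (z : ℝ → ℂ) (f fd : ℝ → ℂ),
      Continuous z →
      (∀ s ∈ Icc (0:ℝ) s₀, ∀ σ ∈ Icc (0:ℝ) s₀, c₀ * |s - σ| ≤ ‖z s - z σ‖) →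
      IntervalIntegrable fd volume 0 s₀ →
      IntervalIntegrable (fun x => ‖fd x‖ ^ p) volume 0 s₀ →
      (∀ s ∈ Icc (0:ℝ) s₀, ∀ σ ∈ Icc (0:ℝ) s₀,
        f s - f σ = ∫ x in σ..s, fd x) →
      ∀ σ ∈ Icc (0:ℝ) s₀,
        (∫ s in (0:ℝ)..s₀, ‖f s - f σ‖ / ‖z s - z σ‖) ≤
          C * (∫ x in (0:ℝ)..s₀, ‖fd x‖ ^ p) ^ (1 / p) :=
  chord_arc_holder_estimate_general p s₀ c₀ hp hc₀
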